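/- arXiv:2502.02495 — 4 statements merged into one kernel-verified Lean document; each statement's English description precedes it below -/
import Mathlib

section
/- For every probabilistic database p over D with endogenous/exogenous partition (D^en, D^ex), every query Q : Finset D → ℝ, and every endogenous tuple τ ∈ D^en: CE(p,Q,τ) = Σ_{W ⊆ D^en \ {τ}} Δ(Q,W,τ) · ( p(W ∪ D^ex) + p(W ∪ D^ex ∪ {τ}) ). -/
open Finset

variable {α : Type*} [DecidableEq α]

/-- The positively intervened distribution `p^{+τ}`:
`p^{+τ}(W) = Σ_{W' ⊆ D, W' ∪ {τ} = W} p(W')`. -/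
noncomputable def pPlus (D : Finset α) (p : Finset α → ℝ) (τ : α) (W : Finset α) : ℝ :=
  ∑ W' ∈ D.powerset.filter (fun W' => W' ∪ {τ} = W), p W'

/-- The negatively intervened distribution `p^{−τ}`:
`p^{−τ}(W) = Σ_{W' ⊆ D, W' \ {τ} = W} p(W')`. -/
noncomputable def pMinus (D : Finset α) (p : Finset α → ℝ) (τ : α) (W : Finset α) : ℝ :=
  ∑ W' ∈ D.powerset.filter (fun W' => W' \ {τ} = W), p W'

/-- The generalized causal-effect score of tuple `τ` for query `Q` on the PDB `p` over `D`:
`CE(p,Q,τ) = Σ_{W ⊆ D} p^{+τ}(W)·Q[W] − Σ_{W ⊆ D} p^{−τ}(W)·Q[W]`. -/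
noncomputable def CE (D : Finset α) (p : Finset α → ℝ) (Q : Finset α → ℝ) (τ : α) : ℝ :=
  ∑ W ∈ D.powerset, pPlus D p τ W * Q W - ∑ W ∈ D.powerset, pMinus D p τ W * Q W

/-- `Δ(Q,W,τ) = Q[W ∪ D^ex ∪ {τ}] − Q[W ∪ D^ex]`. -/
noncomputable def Delta (Dex : Finset α) (Q : Finset α → ℝ) (W : Finset α) (τ : α) : ℝ :=
  Q (W ∪ Dex ∪ {τ}) - Q (W ∪ Dex)
/-!
Both interventions are push-forwards of `p`, so `CE` is the expectation under `p` of
`Q[W ∪ {τ}] - Q[W \ {τ}]`. Worlds missing an exogenous tuple have probability zero, so only the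
worlds `V ∪ D^ex` with `V ⊆ D^en` contribute; pairing `V` with `V ∪ {τ}` for `V ⊆ D^en \ {τ}`,
both worlds of a pair have the same difference `Δ(Q,V,τ)`.
-/

theorem Finset.sum_fiberwise_mul_eq_sum_mul_comp {ι κ R : Type*} [DecidableEq κ]
    [NonUnitalNonAssocSemiring R] {s : Finset ι} {t : Finset κ} {g : ι → κ}
    (h : ∀ i ∈ s, g i ∈ t) (p : ι → R) (Q : κ → R) :
    ∑ j ∈ t, (∑ i ∈ s with g i = j, p i) * Q j = ∑ i ∈ s, p i * Q (g i) := by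
  calc ∑ j ∈ t, (∑ i ∈ s with g i = j, p i) * Q j
      = ∑ j ∈ t, ∑ i ∈ s with g i = j, p i * Q (g i) := by
        refine sum_congr rfl fun j _ => ?_
        rw [sum_mul]
        exact sum_congr rfl fun i hi => by rw [(mem_filter.1 hi).2]
    _ = ∑ i ∈ s, p i * Q (g i) := sum_fiberwise_of_maps_to h _

theorem Finset.sum_powerset_eq_sum_powerset_erase_add {M : Type*} [AddCommMonoid M]
    {s : Finset α} {a : α} (ha : a ∈ s) (f : Finset α → M) :
    ∑ t ∈ s.powerset, f t = ∑ t ∈ (s.erase a).powerset, (f t + f (insert a t)) := by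
  conv_lhs => rw [← insert_erase ha]
  rw [sum_powerset_insert (notMem_erase a s), sum_add_distrib]

theorem Finset.sum_powerset_union_eq_sum_powerset_union_right {M : Type*} [AddCommMonoid M]
    {s t : Finset α} (hst : Disjoint s t) {f : Finset α → M}
    (hf : ∀ u ⊆ s ∪ t, ¬ t ⊆ u → f u = 0) :
    ∑ u ∈ (s ∪ t).powerset, f u = ∑ v ∈ s.powerset, f (v ∪ t) := by
  rw [← sum_filter_of_ne (p := fun u => t ⊆ u)
    fun u hu hfu => not_not.1 fun htu => hfu (hf u (mem_powerset.1 hu) htu)]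
  refine sum_nbij' (· \ t) (· ∪ t) ?_ ?_ ?_ ?_ fun u hu => ?_
  · intro u hu
    simp only [mem_filter, mem_powerset] at hu ⊢
    exact sdiff_le_iff'.2 hu.1
  · intro v hv
    simp only [mem_filter, mem_powerset] at hv ⊢
    exact ⟨union_subset_union hv subset_rfl, subset_union_right⟩
  · intro u hu
    exact sdiff_union_of_subset (mem_filter.1 hu).2
  · intro v hv
    exact union_sdiff_cancel_right (hst.mono_left (mem_powerset.1 hv))
  · rw [sdiff_union_of_subset (mem_filter.1 hu).2]

theorem sum_pPlus_mul {D : Finset α} {τ : α} (hτ : τ ∈ D) (p Q : Finset α → ℝ) :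
    ∑ W ∈ D.powerset, pPlus D p τ W * Q W = ∑ W ∈ D.powerset, p W * Q (W ∪ {τ}) :=
  sum_fiberwise_mul_eq_sum_mul_comp
    (fun _ hW => mem_powerset.2 (union_subset (mem_powerset.1 hW) (singleton_subset_iff.2 hτ))) _ _

theorem sum_pMinus_mul (D : Finset α) (τ : α) (p Q : Finset α → ℝ) :
    ∑ W ∈ D.powerset, pMinus D p τ W * Q W = ∑ W ∈ D.powerset, p W * Q (W \ {τ}) :=
  sum_fiberwise_mul_eq_sum_mul_comp
    (fun _ hW => mem_powerset.2 (sdiff_subset.trans (mem_powerset.1 hW))) _ _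

theorem CE_eq_sum_mul_sub {D : Finset α} {τ : α} (hτ : τ ∈ D) (p Q : Finset α → ℝ) :
    CE D p Q τ = ∑ W ∈ D.powerset, p W * (Q (W ∪ {τ}) - Q (W \ {τ})) := by
  simp only [CE, sum_pPlus_mul hτ, sum_pMinus_mul, mul_sub, sum_sub_distrib]

theorem mul_sub_add_mul_sub_insert {τ : α} {X : Finset α} (hτ : τ ∉ X) (p Q : Finset α → ℝ) :
    p X * (Q (X ∪ {τ}) - Q (X \ {τ}))
        + p (insert τ X) * (Q (insert τ X ∪ {τ}) - Q (insert τ X \ {τ}))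
      = (Q (X ∪ {τ}) - Q X) * (p X + p (X ∪ {τ})) := by
  have hXτ : Disjoint X {τ} := disjoint_singleton_right.2 hτ
  rw [insert_eq, union_comm {τ} X, union_assoc, union_self, union_sdiff_cancel_right hXτ,
    sdiff_eq_self_of_disjoint hXτ]
  ring

theorem stmt1_general (D Den Dex : Finset α)
    (hunion : Den ∪ Dex = D) (hdisj : Disjoint Den Dex)
    (p : Finset α → ℝ)
    (hexo : ∀ W ∈ D.powerset, ¬ Dex ⊆ W → p W = 0)
    (Q : Finset α → ℝ) (τ : α) (hτ : τ ∈ Den) :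
    CE D p Q τ =
      ∑ W ∈ (Den.erase τ).powerset,
        Delta Dex Q W τ * (p (W ∪ Dex) + p (W ∪ Dex ∪ {τ})) := by
  subst hunion
  have hτex : τ ∉ Dex := disjoint_left.1 hdisj hτ
  rw [CE_eq_sum_mul_sub (mem_union_left _ hτ),
    sum_powerset_union_eq_sum_powerset_union_right hdisj
      fun W hW hexW => by rw [hexo W (mem_powerset.2 hW) hexW, zero_mul],
    sum_powerset_eq_sum_powerset_erase_add hτ]
  refine sum_congr rfl fun W hW => ?_
  have hτW : τ ∉ W ∪ Dex :=
    notMem_union.2 ⟨fun h => notMem_erase τ Den (mem_powerset.1 hW h), hτex⟩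
  rw [insert_union, mul_sub_add_mul_sub_insert hτW, Delta]

/-- For any PDB `p` over `D = D^en ∪ D^ex` (vanishing on worlds not containing `D^ex`),
any query `Q`, and any endogenous tuple `τ`:
`CE(p,Q,τ) = Σ_{W ⊆ D^en \ {τ}} Δ(Q,W,τ)·(p(W ∪ D^ex) + p(W ∪ D^ex ∪ {τ}))`. -/
theorem stmt1 (D Den Dex : Finset α)
    (hunion : Den ∪ Dex = D) (hdisj : Disjoint Den Dex)
    (p : Finset α → ℝ)
    (hp0 : ∀ W ∈ D.powerset, 0 ≤ p W)
    (hp1 : ∑ W ∈ D.powerset, p W = 1)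
    (hexo : ∀ W ∈ D.powerset, ¬ Dex ⊆ W → p W = 0)
    (Q : Finset α → ℝ) (τ : α) (hτ : τ ∈ Den) :
    CE D p Q τ =
      ∑ W ∈ (Den.erase τ).powerset,
        Delta Dex Q W τ * (p (W ∪ Dex) + p (W ∪ Dex ∪ {τ})) :=
  stmt1_general D Den Dex hunion hdisj p hexo Q τ hτ
end

section
/- (GCES satisfies G-EFF.) For every probabilistic database p over D with endogenous/exogenous partition (D^en, D^ex) and every Boolean query Q : Finset D → {0,1}: Σ_{τ ∈ D^en} CE(p,Q,τ) = Σ_{W ⊊ D^en} Σ_{τ ∈ D^en \ W} Δ(Q,W,τ) · ( p(W ∪ D^ex) + p(W ∪ D^ex ∪ {τ}) ). -/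
open Finset

variable {α : Type*} [DecidableEq α]

/-- (GCES satisfies G-EFF.) For any PDB `p` over `D = D^en ∪ D^ex` (vanishing on worlds
not containing `D^ex`) and any Boolean query `Q`:
`Σ_{τ ∈ D^en} CE(p,Q,τ)
  = Σ_{W ⊊ D^en} Σ_{τ ∈ D^en \ W} Δ(Q,W,τ)·(p(W ∪ D^ex) + p(W ∪ D^ex ∪ {τ}))`. -/
theorem stmt4 (D Den Dex : Finset α)
    (hunion : Den ∪ Dex = D) (hdisj : Disjoint Den Dex)
    (p : Finset α → ℝ)
    (hp0 : ∀ W ∈ D.powerset, 0 ≤ p W)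
    (hp1 : ∑ W ∈ D.powerset, p W = 1)
    (hexo : ∀ W ∈ D.powerset, ¬ Dex ⊆ W → p W = 0)
    (Q : Finset α → ℝ) (hBool : ∀ W ⊆ D, Q W = 0 ∨ Q W = 1) :
    ∑ τ ∈ Den, CE D p Q τ =
      ∑ W ∈ Den.powerset.erase Den, ∑ τ ∈ Den \ W,
        Delta Dex Q W τ * (p (W ∪ Dex) + p (W ∪ Dex ∪ {τ})) := by
  -- Step 1: rewrite CE as a single sum over subsets of Den.
  have hCE : ∀ τ ∈ Den, CE D p Q τ =
      ∑ V ∈ Den.powerset, p (V ∪ Dex) * (Q (V ∪ Dex ∪ {τ}) - Q ((V \ {τ}) ∪ Dex)) := by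
    intro τ hτ
    have hτD : τ ∈ D := by rw [← hunion]; exact mem_union_left _ hτ
    have hτex : τ ∉ Dex := fun h => (Finset.disjoint_left.mp hdisj hτ) h
    have h1 : ∑ W ∈ D.powerset, pPlus D p τ W * Q W
        = ∑ W' ∈ D.powerset, p W' * Q (W' ∪ {τ}) := by
      rw [← Finset.sum_fiberwise_of_maps_to (g := fun W' => W' ∪ {τ})
        (t := D.powerset)
        (fun W' hW' => by
          simp only [mem_powerset] at *
          exact union_subset hW' (by simpa using hτD)) (fun W' => p W' * Q (W' ∪ {τ}))]
      refine Finset.sum_congr rfl fun W _ => ?_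
      rw [pPlus, Finset.sum_mul]
      refine Finset.sum_congr rfl fun W' hW' => ?_
      rw [(mem_filter.mp hW').2]
    have h2 : ∑ W ∈ D.powerset, pMinus D p τ W * Q W
        = ∑ W' ∈ D.powerset, p W' * Q (W' \ {τ}) := by
      rw [← Finset.sum_fiberwise_of_maps_to (g := fun W' => W' \ {τ})
        (t := D.powerset)
        (fun W' hW' => by
          simp only [mem_powerset] at *
          exact (sdiff_subset).trans hW') (fun W' => p W' * Q (W' \ {τ}))]
      refine Finset.sum_congr rfl fun W _ => ?_
      rw [pMinus, Finset.sum_mul]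
      refine Finset.sum_congr rfl fun W' hW' => ?_
      rw [(mem_filter.mp hW').2]
    rw [CE, h1, h2, ← Finset.sum_sub_distrib]
    have h3 : ∑ W' ∈ D.powerset, (p W' * Q (W' ∪ {τ}) - p W' * Q (W' \ {τ}))
        = ∑ W' ∈ D.powerset.filter (fun W' => Dex ⊆ W'),
            p W' * (Q (W' ∪ {τ}) - Q (W' \ {τ})) := by
      have hmid : ∑ W' ∈ D.powerset, (p W' * Q (W' ∪ {τ}) - p W' * Q (W' \ {τ}))
          = ∑ W' ∈ D.powerset, p W' * (Q (W' ∪ {τ}) - Q (W' \ {τ})) :=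
        Finset.sum_congr rfl fun W' _ => by ring
      rw [hmid]
      refine (Finset.sum_subset
        (Finset.filter_subset (fun W' => Dex ⊆ W') D.powerset) ?_).symm
      intro W' hW' hW'2
      have hns : ¬ Dex ⊆ W' := fun h => hW'2 (mem_filter.mpr ⟨hW', h⟩)
      rw [hexo W' hW' hns]; ring
    rw [h3]
    refine (Finset.sum_nbij' (i := fun V => V ∪ Dex) (j := fun W => W \ Dex)
      ?_ ?_ ?_ ?_ ?_).symm
    · intro V hV
      simp only [mem_powerset] at hV
      refine mem_filter.mpr ⟨mem_powerset.mpr ?_, subset_union_right⟩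
      rw [← hunion]; exact union_subset_union hV (Finset.Subset.refl _)
    · intro W hW
      simp only [mem_filter, mem_powerset] at hW ⊢
      intro x hx
      have hxD : x ∈ D := hW.1 (Finset.mem_sdiff.mp hx).1
      rw [← hunion] at hxD
      rcases Finset.mem_union.mp hxD with h | h
      · exact h
      · exact absurd h (Finset.mem_sdiff.mp hx).2
    · intro V hV
      simp only [mem_powerset] at hV
      show (V ∪ Dex) \ Dex = V
      rw [Finset.union_sdiff_right]
      exact Finset.sdiff_eq_self_of_disjoint (Finset.disjoint_of_subset_left hV hdisj)
    · intro W hW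
      simp only [mem_filter] at hW
      exact Finset.sdiff_union_of_subset hW.2
    · intro V hV
      have e : (V ∪ Dex) \ {τ} = (V \ {τ}) ∪ Dex := by
        ext x
        simp only [Finset.mem_sdiff, Finset.mem_union, Finset.mem_singleton]
        constructor
        · rintro ⟨h | h, h2⟩
          · exact Or.inl ⟨h, h2⟩
          · exact Or.inr h
        · rintro (⟨h, h2⟩ | h)
          · exact ⟨Or.inl h, h2⟩
          · exact ⟨Or.inr h, fun h2 => hτex (h2 ▸ h)⟩
      show p (V ∪ Dex) * (Q (V ∪ Dex ∪ {τ}) - Q (V \ {τ} ∪ Dex))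
        = p (V ∪ Dex) * (Q ((V ∪ Dex) ∪ {τ}) - Q ((V ∪ Dex) \ {τ}))
      rw [e]
  -- Step 2: for each τ, split according to τ ∈ V.
  have hsplit : ∀ τ ∈ Den,
      ∑ V ∈ Den.powerset, p (V ∪ Dex) * (Q (V ∪ Dex ∪ {τ}) - Q ((V \ {τ}) ∪ Dex))
      = ∑ U ∈ (Den.erase τ).powerset,
          Delta Dex Q U τ * (p (U ∪ Dex) + p (U ∪ Dex ∪ {τ})) := by
    intro τ hτ
    have hins : Den = insert τ (Den.erase τ) := (Finset.insert_erase hτ).symm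
    conv_lhs => rw [hins]
    rw [Finset.sum_powerset_insert (Finset.notMem_erase τ Den),
      ← Finset.sum_add_distrib]
    refine Finset.sum_congr rfl fun U hU => ?_
    have hτU : τ ∉ U := fun h =>
      (Finset.notMem_erase τ Den) (Finset.mem_powerset.mp hU h)
    have e1 : U \ {τ} = U := by
      rw [Finset.sdiff_singleton_eq_erase, Finset.erase_eq_of_notMem hτU]
    have e2 : insert τ U \ {τ} = U := by
      rw [Finset.sdiff_singleton_eq_erase, Finset.erase_insert hτU]
    have e3 : insert τ U ∪ Dex = U ∪ Dex ∪ {τ} := by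
      ext x
      simp only [Finset.mem_insert, Finset.mem_union, Finset.mem_singleton]
      tauto
    have e4 : U ∪ Dex ∪ {τ} ∪ {τ} = U ∪ Dex ∪ {τ} := by
      ext x
      simp only [Finset.mem_union, Finset.mem_singleton]
      tauto
    rw [e1, e2, e3, e4, Delta]
    ring
  rw [Finset.sum_congr rfl hCE, Finset.sum_congr rfl hsplit]
  -- Step 3: swap the order of summation.
  have hpow : ∀ τ : α, (Den.erase τ).powerset
      = Den.powerset.filter (fun W => τ ∉ W) := by
    intro τ
    ext W
    simp only [mem_powerset, mem_filter, Finset.subset_erase]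
  have hz : (fun W => ∑ τ ∈ Den \ W,
      Delta Dex Q W τ * (p (W ∪ Dex) + p (W ∪ Dex ∪ {τ}))) Den = 0 := by
    simp
  rw [Finset.sum_erase Den.powerset hz]
  rw [Finset.sum_congr rfl (fun τ _ => by rw [hpow τ, Finset.sum_filter])]
  rw [Finset.sum_comm]
  refine Finset.sum_congr rfl fun W hW => ?_
  rw [← Finset.sum_filter, ← Finset.sdiff_eq_filter]
end

section
/- (GCES satisfies G-SYM.) Let p be a probabilistic database over D with endogenous/exogenous partition (D^en, D^ex), Q : Finset D → {0,1} a monotone Boolean query, and τ, τ' ∈ D^en distinct tuples such that Δ(Q,W,τ) = Δ(Q,W,τ') = 0 for every W ⊆ D^en \ {τ,τ'}. Then CE(p,Q,τ) − Power^w(p,Q,τ) = CE(p,Q,τ') − Power^w(p,Q,τ'), where Power^w(p,Q,σ) := Σ_{W ⊆ D^en \ {σ}} Δ(Q,W,σ) · p(W ∪ D^ex). -/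
open Finset

variable {α : Type*} [DecidableEq α]

lemma CE_eq (D : Finset α) (p Q : Finset α → ℝ) (τ : α) (hτ : τ ∈ D) :
    CE D p Q τ = ∑ W ∈ D.powerset, p W * (Q (W ∪ {τ}) - Q (W \ {τ})) := by
  unfold CE pPlus pMinus
  have h1 : ∑ W ∈ D.powerset, (∑ W' ∈ D.powerset.filter (fun W' => W' ∪ {τ} = W), p W') * Q W
      = ∑ W' ∈ D.powerset, p W' * Q (W' ∪ {τ}) := by
    rw [← Finset.sum_fiberwise_of_maps_to (g := fun W' => W' ∪ {τ})
      (t := D.powerset) ?_ (fun W' => p W' * Q (W' ∪ {τ}))]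
    · refine Finset.sum_congr rfl fun W _ => ?_
      rw [Finset.sum_mul]
      refine Finset.sum_congr rfl fun W' hW' => ?_
      rw [(Finset.mem_filter.mp hW').2]
    · intro W' hW'
      simp only [Finset.mem_powerset] at *
      exact Finset.union_subset hW' (by simpa using hτ)
  have h2 : ∑ W ∈ D.powerset, (∑ W' ∈ D.powerset.filter (fun W' => W' \ {τ} = W), p W') * Q W
      = ∑ W' ∈ D.powerset, p W' * Q (W' \ {τ}) := by
    rw [← Finset.sum_fiberwise_of_maps_to (g := fun W' => W' \ {τ})
      (t := D.powerset) ?_ (fun W' => p W' * Q (W' \ {τ}))]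
    · refine Finset.sum_congr rfl fun W _ => ?_
      rw [Finset.sum_mul]
      refine Finset.sum_congr rfl fun W' hW' => ?_
      rw [(Finset.mem_filter.mp hW').2]
    · intro W' hW'
      simp only [Finset.mem_powerset] at *
      exact (Finset.sdiff_subset).trans hW'
  rw [h1, h2, ← Finset.sum_sub_distrib]
  exact Finset.sum_congr rfl fun W _ => by ring

lemma reindex (D Den Dex : Finset α) (hunion : Den ∪ Dex = D) (hdisj : Disjoint Den Dex)
    (f : Finset α → ℝ) (hf : ∀ W ∈ D.powerset, ¬ Dex ⊆ W → f W = 0) :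
    ∑ W ∈ D.powerset, f W = ∑ V ∈ Den.powerset, f (V ∪ Dex) := by
  rw [← Finset.sum_filter_add_sum_filter_not D.powerset (fun W => Dex ⊆ W)]
  have hz : ∑ W ∈ D.powerset.filter (fun W => ¬ Dex ⊆ W), f W = 0 :=
    Finset.sum_eq_zero fun W hW => by
      have := Finset.mem_filter.mp hW
      exact hf W this.1 this.2
  rw [hz, add_zero]
  refine Finset.sum_nbij' (fun W => W \ Dex) (fun V => V ∪ Dex) ?_ ?_ ?_ ?_ ?_
  · intro W hW
    have := Finset.mem_filter.mp hW
    have hWD := Finset.mem_powerset.mp this.1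
    rw [Finset.mem_powerset]
    intro x hx
    have := hWD (Finset.mem_sdiff.mp hx).1
    rw [← hunion] at this
    rcases Finset.mem_union.mp this with h | h
    · exact h
    · exact absurd h (Finset.mem_sdiff.mp hx).2
  · intro V hV
    rw [Finset.mem_filter, Finset.mem_powerset]
    exact ⟨Finset.union_subset ((Finset.mem_powerset.mp hV).trans
      (by rw [← hunion]; exact Finset.subset_union_left))
      (by rw [← hunion]; exact Finset.subset_union_right), Finset.subset_union_right⟩
  · intro W hW
    exact Finset.sdiff_union_of_subset (Finset.mem_filter.mp hW).2
  · intro V hV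
    exact Finset.union_sdiff_cancel_right
      (hdisj.mono_left (Finset.mem_powerset.mp hV))
  · intro W hW
    rw [Finset.sdiff_union_of_subset (Finset.mem_filter.mp hW).2]

/-- The weighted power of a tuple `σ`:
`Power^w(p,Q,σ) = Σ_{W ⊆ D^en \ {σ}} Δ(Q,W,σ)·p(W ∪ D^ex)`. -/
noncomputable def Powerw (Den Dex : Finset α) (p : Finset α → ℝ)
    (Q : Finset α → ℝ) (σ : α) : ℝ :=
  ∑ W ∈ (Den.erase σ).powerset, Delta Dex Q W σ * p (W ∪ Dex)

lemma key (D Den Dex : Finset α) (hunion : Den ∪ Dex = D) (hdisj : Disjoint Den Dex)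
    (p : Finset α → ℝ) (hexo : ∀ W ∈ D.powerset, ¬ Dex ⊆ W → p W = 0)
    (Q : Finset α → ℝ) (τ : α) (hτ : τ ∈ Den) :
    CE D p Q τ - Powerw Den Dex p Q τ
      = ∑ U ∈ (Den.erase τ).powerset, p (insert τ U ∪ Dex) * Delta Dex Q U τ := by
  have hτD : τ ∈ D := hunion ▸ Finset.mem_union_left _ hτ
  have hτex : τ ∉ Dex := Finset.disjoint_left.mp hdisj hτ
  rw [CE_eq D p Q τ hτD,
      reindex D Den Dex hunion hdisj _ (fun W hW h => by rw [hexo W hW h, zero_mul])]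
  have hsplit : ∀ f : Finset α → ℝ, ∑ V ∈ Den.powerset, f V
      = ∑ U ∈ (Den.erase τ).powerset, f U + ∑ U ∈ (Den.erase τ).powerset, f (insert τ U) := by
    intro f
    conv_lhs => rw [← Finset.insert_erase hτ]
    exact Finset.sum_powerset_insert (Finset.notMem_erase τ Den) f
  rw [hsplit, Powerw]
  have hterm1 : ∀ U ∈ (Den.erase τ).powerset,
      p (U ∪ Dex) * (Q (U ∪ Dex ∪ {τ}) - Q ((U ∪ Dex) \ {τ}))
      = Delta Dex Q U τ * p (U ∪ Dex) := by
    intro U hU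
    have hτU : τ ∉ U := fun h =>
      Finset.notMem_erase τ Den ((Finset.mem_powerset.mp hU) h)
    have : (U ∪ Dex) \ {τ} = U ∪ Dex := by
      ext x
      by_cases hx : x = τ
      · subst hx; simp [hτU, hτex]
      · simp [hx]
    rw [this, Delta]; ring
  have hterm2 : ∀ U ∈ (Den.erase τ).powerset,
      p (insert τ U ∪ Dex) * (Q (insert τ U ∪ Dex ∪ {τ}) - Q ((insert τ U ∪ Dex) \ {τ}))
      = p (insert τ U ∪ Dex) * Delta Dex Q U τ := by
    intro U hU
    have hτU : τ ∉ U := fun h =>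
      Finset.notMem_erase τ Den ((Finset.mem_powerset.mp hU) h)
    have e1 : insert τ U ∪ Dex ∪ {τ} = U ∪ Dex ∪ {τ} := by
      ext x
      simp only [Finset.mem_union, Finset.mem_insert, Finset.mem_singleton]
      tauto
    have e2 : (insert τ U ∪ Dex) \ {τ} = U ∪ Dex := by
      ext x
      by_cases hx : x = τ
      · subst hx; simp [hτU, hτex]
      · simp [hx]
    rw [e1, e2, Delta]
  rw [Finset.sum_congr rfl hterm1, Finset.sum_congr rfl hterm2]
  ring

/-- (GCES satisfies G-SYM.) For any PDB `p` over `D = D^en ∪ D^ex` (vanishing on worlds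
not containing `D^ex`), a monotone Boolean query `Q`, and distinct endogenous tuples
`τ, τ'` with `Δ(Q,W,τ) = Δ(Q,W,τ') = 0` for all `W ⊆ D^en \ {τ,τ'}`:
`CE(p,Q,τ) − Power^w(p,Q,τ) = CE(p,Q,τ') − Power^w(p,Q,τ')`. -/
theorem stmt5 (D Den Dex : Finset α)
    (hunion : Den ∪ Dex = D) (hdisj : Disjoint Den Dex)
    (p : Finset α → ℝ)
    (hp0 : ∀ W ∈ D.powerset, 0 ≤ p W)
    (hp1 : ∑ W ∈ D.powerset, p W = 1)
    (hexo : ∀ W ∈ D.powerset, ¬ Dex ⊆ W → p W = 0)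
    (Q : Finset α → ℝ)
    (hBool : ∀ W ⊆ D, Q W = 0 ∨ Q W = 1)
    (hMono : ∀ W₁ W₂ : Finset α, W₁ ⊆ W₂ → Q W₁ ≤ Q W₂)
    (τ τ' : α) (hτ : τ ∈ Den) (hτ' : τ' ∈ Den) (hne : τ ≠ τ')
    (hsym : ∀ W ⊆ Den \ {τ, τ'}, Delta Dex Q W τ = 0 ∧ Delta Dex Q W τ' = 0) :
    CE D p Q τ - Powerw Den Dex p Q τ = CE D p Q τ' - Powerw Den Dex p Q τ' := by
  rw [key D Den Dex hunion hdisj p hexo Q τ hτ,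
      key D Den Dex hunion hdisj p hexo Q τ' hτ']
  set S := (Den.erase τ).erase τ' with hS
  have hS' : (Den.erase τ').erase τ = S := by
    ext x
    simp only [hS, Finset.mem_erase]
    tauto
  have hτ'mem : τ' ∈ Den.erase τ := Finset.mem_erase.mpr ⟨Ne.symm hne, hτ'⟩
  have hτmem : τ ∈ Den.erase τ' := Finset.mem_erase.mpr ⟨hne, hτ⟩
  have split1 : ∀ f : Finset α → ℝ, ∑ U ∈ (Den.erase τ).powerset, f U
      = ∑ V ∈ S.powerset, f V + ∑ V ∈ S.powerset, f (insert τ' V) := by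
    intro f
    conv_lhs => rw [← Finset.insert_erase hτ'mem]
    exact Finset.sum_powerset_insert (Finset.notMem_erase τ' _) f
  have split2 : ∀ f : Finset α → ℝ, ∑ U ∈ (Den.erase τ').powerset, f U
      = ∑ V ∈ S.powerset, f V + ∑ V ∈ S.powerset, f (insert τ V) := by
    intro f
    conv_lhs => rw [← Finset.insert_erase hτmem]
    rw [hS']
    exact Finset.sum_powerset_insert (by rw [← hS']; exact Finset.notMem_erase τ _) f
  rw [split1, split2]
  have hsub : ∀ V ∈ S.powerset, V ⊆ Den \ {τ, τ'} := by
    intro V hV x hx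
    have := (Finset.mem_powerset.mp hV) hx
    rw [Finset.mem_erase, Finset.mem_erase] at this
    simp only [Finset.mem_sdiff, Finset.mem_insert, Finset.mem_singleton]
    tauto
  have hz1 : ∑ V ∈ S.powerset, p (insert τ V ∪ Dex) * Delta Dex Q V τ = 0 :=
    Finset.sum_eq_zero fun V hV => by rw [(hsym V (hsub V hV)).1, mul_zero]
  have hz2 : ∑ V ∈ S.powerset, p (insert τ' V ∪ Dex) * Delta Dex Q V τ' = 0 :=
    Finset.sum_eq_zero fun V hV => by rw [(hsym V (hsub V hV)).2, mul_zero]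
  rw [hz1, hz2, zero_add, zero_add]
  refine Finset.sum_congr rfl fun V hV => ?_
  have hτV : τ ∉ V := fun h => by
    have := Finset.mem_sdiff.mp (hsub V hV h)
    simp at this
  have hτ'V : τ' ∉ V := fun h => by
    have := Finset.mem_sdiff.mp (hsub V hV h)
    simp at this
  have hΔτ : Q (V ∪ Dex ∪ {τ}) = Q (V ∪ Dex) :=
    sub_eq_zero.mp (hsym V (hsub V hV)).1
  have hΔτ' : Q (V ∪ Dex ∪ {τ'}) = Q (V ∪ Dex) :=
    sub_eq_zero.mp (hsym V (hsub V hV)).2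
  have hins : insert τ (insert τ' V) = insert τ' (insert τ V) := by
    ext x
    simp only [Finset.mem_insert]
    tauto
  have e1 : insert τ' V ∪ Dex ∪ {τ} = insert τ (insert τ' V) ∪ Dex := by
    ext x
    simp only [Finset.mem_union, Finset.mem_insert, Finset.mem_singleton]
    tauto
  have e2 : insert τ V ∪ Dex ∪ {τ'} = insert τ (insert τ' V) ∪ Dex := by
    ext x
    simp only [Finset.mem_union, Finset.mem_insert, Finset.mem_singleton]
    tauto
  have e3 : insert τ' V ∪ Dex = V ∪ Dex ∪ {τ'} := by
    ext x
    simp only [Finset.mem_union, Finset.mem_insert, Finset.mem_singleton]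
    tauto
  have e4 : insert τ V ∪ Dex = V ∪ Dex ∪ {τ} := by
    ext x
    simp only [Finset.mem_union, Finset.mem_insert, Finset.mem_singleton]
    tauto
  rw [Delta, Delta, hins, e1, e2, e3, e4, hΔτ, hΔτ', hins]
end

section
/- (GCES satisfies LIN.) For every probabilistic database p over D, all Boolean queries Q, Q' : Finset D → {0,1}, and every tuple τ ∈ D: CE(p, Q∨Q', τ) + CE(p, Q∧Q', τ) = CE(p,Q,τ) + CE(p,Q',τ), where (Q∨Q')[W] := max(Q[W],Q'[W]) and (Q∧Q')[W] := min(Q[W],Q'[W]). -/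
open Finset

variable {α : Type*} [DecidableEq α]

theorem CE_add (D : Finset α) (p Q Q' : Finset α → ℝ) (τ : α) :
    CE D p (fun W => Q W + Q' W) τ = CE D p Q τ + CE D p Q' τ := by
  simp only [CE, mul_add, sum_add_distrib]
  ring

theorem stmt6_general (D : Finset α)
    (p : Finset α → ℝ)
    (Q Q' : Finset α → ℝ)
    (τ : α) :
    CE D p (fun W => max (Q W) (Q' W)) τ + CE D p (fun W => min (Q W) (Q' W)) τ =
      CE D p Q τ + CE D p Q' τ := by
  simp only [← CE_add, max_add_min]

/-- (GCES satisfies LIN.) For any PDB `p` over `D`, Boolean queries `Q, Q'`, and any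
tuple `τ ∈ D`: `CE(p,Q∨Q',τ) + CE(p,Q∧Q',τ) = CE(p,Q,τ) + CE(p,Q',τ)`, where
`(Q∨Q')[W] = max(Q[W],Q'[W])` and `(Q∧Q')[W] = min(Q[W],Q'[W])`. -/
theorem stmt6 (D : Finset α)
    (p : Finset α → ℝ)
    (hp0 : ∀ W ∈ D.powerset, 0 ≤ p W)
    (hp1 : ∑ W ∈ D.powerset, p W = 1)
    (Q Q' : Finset α → ℝ)
    (hBool : ∀ W ⊆ D, Q W = 0 ∨ Q W = 1)
    (hBool' : ∀ W ⊆ D, Q' W = 0 ∨ Q' W = 1)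
    (τ : α) (hτ : τ ∈ D) :
    CE D p (fun W => max (Q W) (Q' W)) τ + CE D p (fun W => min (Q W) (Q' W)) τ =
      CE D p Q τ + CE D p Q' τ :=
  stmt6_general D p Q Q' τ
end
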